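/- A matrix sequence {C_n} ∈ 𝔈 satisfies ρ({C_n}) = 0 if and only if {C_n} is zero-distributed, i.e., {C_n} ∼_σ 0, where 0 is the identically zero function on D. -/

import Mathlib

/-! Write `c_n(ε)` for the fraction of singular values of `C_n` exceeding `ε`. Since the singular
values are sorted, `min(ε, c_n(ε)) ≤ p(C_n) ≤ c_n(ε) + ε`, so `ρ({C_n}) = 0` iff `c_n(ε) → 0` for
every `ε > 0`. The same holds for `{C_n} ∼_σ 0`, which says that the empirical singular value
distributions converge vaguely to the Dirac mass at `0`: a bump function equal to `1` at `0` and
vanishing outside `(-ε, ε)` bounds `c_n(ε)` from above, and conversely continuity of a test function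
`F` at `0` bounds `|(1/n) ∑ F(σᵢ) - F(0)|` by a small constant plus `2 ‖F‖_∞ c_n(δ)`. -/

open MeasureTheory Filter
open scoped ENNReal NNReal

/-- The singular values of a complex square matrix, arranged in non-increasing order:
`sv A 0 = σ₁(A) ≥ sv A 1 = σ₂(A) ≥ …` (the square roots of the eigenvalues of `Aᴴ * A`). -/
noncomputable def sv {n : ℕ} (A : Matrix (Fin n) (Fin n) ℂ) : Fin n → ℝ :=
  fun i =>
    (fun j => Real.sqrt ((Matrix.isHermitian_conjTranspose_mul_self A).eigenvalues j))
      (Tuple.sort (fun j => Real.sqrt ((Matrix.isHermitian_conjTranspose_mul_self A).eigenvalues j))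
        i.rev)

/-- `p(A) := min_{1 ≤ i ≤ n} ((i-1)/n + σᵢ(A))` (here `i : Fin n` plays the role of `i-1`). -/
noncomputable def pA {n : ℕ} (A : Matrix (Fin n) (Fin n) ℂ) : ℝ :=
  ⨅ i : Fin n, (((i : ℕ) : ℝ) / n + sv A i)

/-- `ρ({A_n}) := limsup_{n→∞} p(A_n)`, valued in `[0,∞]`. -/
noncomputable def rho (A : (n : ℕ) → Matrix (Fin n) (Fin n) ℂ) : ℝ≥0∞ :=
  Filter.limsup (fun n => ENNReal.ofReal (pA (A n))) Filter.atTop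

/-- The a.c.s. pseudometric `d_acs({A_n},{B_n}) := ρ({A_n − B_n})`. -/
noncomputable def dacs (A B : (n : ℕ) → Matrix (Fin n) (Fin n) ℂ) : ℝ≥0∞ :=
  rho (fun n => A n - B n)

/-- `{A_n} ∼_σ k` : the sequence `{A_n}` has spectral (singular value) symbol `k` on `D`. -/
def SpecSymb {d : ℕ} (D : Set (Fin d → ℝ)) (A : (n : ℕ) → Matrix (Fin n) (Fin n) ℂ)
    (k : (Fin d → ℝ) → ℂ) : Prop :=
  ∀ F : ℝ → ℂ, Continuous F → HasCompactSupport F →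
    Filter.Tendsto (fun n : ℕ => (n : ℂ)⁻¹ * ∑ i : Fin n, F (sv (A n) i)) Filter.atTop
      (nhds ((volume D).toReal⁻¹ • ∫ x in D, F ‖k x‖))

/-- `p_m(f) := inf_{E ⊆ D measurable} ( |D∖E|/|D| + esssup_{x∈E} |f(x)| )`, valued in `[0,∞]`. -/
noncomputable def pm {d : ℕ} (D : Set (Fin d → ℝ)) (f : (Fin d → ℝ) → ℂ) : ℝ≥0∞ :=
  ⨅ (E : Set (Fin d → ℝ)) (_ : MeasurableSet E) (_ : E ⊆ D),
    (volume (D \ E) / volume D + essSup (fun x => (‖f x‖₊ : ℝ≥0∞)) (volume.restrict E))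

/-- `d_m(f,g) := p_m(f − g)`. -/
noncomputable def dm {d : ℕ} (D : Set (Fin d → ℝ)) (f g : (Fin d → ℝ) → ℂ) : ℝ≥0∞ :=
  pm D (fun x => f x - g x)

/-- A "group in 𝒞_D": a set `G` of pairs `({A_n}, k)` with `k` measurable and `{A_n} ∼_σ k`,
closed under addition and negation. -/
def IsGroupIn {d : ℕ} (D : Set (Fin d → ℝ))
    (G : Set (((n : ℕ) → Matrix (Fin n) (Fin n) ℂ) × ((Fin d → ℝ) → ℂ))) : Prop :=
  (∀ p ∈ G, Measurable p.2 ∧ SpecSymb D p.1 p.2) ∧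
  (∀ p ∈ G, ∀ q ∈ G, ((fun n => p.1 n + q.1 n), p.2 + q.2) ∈ G) ∧
  (∀ p ∈ G, ((fun n => -(p.1 n)), -p.2) ∈ G)

open Finset Topology

noncomputable def countGt {n : ℕ} (s : Fin n → ℝ) (ε : ℝ) : ℕ := #{i | ε < s i}

lemma Antitone.lt_iff_lt_countGt {n : ℕ} {s : Fin n → ℝ} (hs : Antitone s) {ε : ℝ} {i : Fin n} :
    ε < s i ↔ (i : ℕ) < countGt s ε := by
  constructor
  · intro hi
    have hsub : Iic i ⊆ ({j | ε < s j} : Finset (Fin n)) := fun j hj =>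
      mem_filter.2 ⟨mem_univ _, hi.trans_le (hs (mem_Iic.1 hj))⟩
    simpa [countGt] using card_le_card hsub
  · intro hi
    by_contra! hle
    have hsub : ({j | ε < s j} : Finset (Fin n)) ⊆ Iio i := fun j hj => by
      rw [mem_Iio]
      by_contra! hij
      exact (mem_filter.1 hj).2.not_ge ((hs hij).trans hle)
    have := card_le_card hsub
    simp only [Fin.card_Iio] at this
    exact this.not_gt hi

lemma sv_nonneg {n : ℕ} (A : Matrix (Fin n) (Fin n) ℂ) (i : Fin n) : 0 ≤ sv A i :=
  Real.sqrt_nonneg _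

lemma sv_antitone {n : ℕ} (A : Matrix (Fin n) (Fin n) ℂ) : Antitone (sv A) :=
  fun _ _ hij => Tuple.monotone_sort
    (fun j => Real.sqrt ((Matrix.isHermitian_conjTranspose_mul_self A).eigenvalues j))
    (Fin.rev_le_rev.mpr hij)

lemma pA_nonneg {n : ℕ} (A : Matrix (Fin n) (Fin n) ℂ) : 0 ≤ pA A :=
  Real.iInf_nonneg fun i => add_nonneg (by positivity) (sv_nonneg A i)

lemma pA_le_countGt_div_add {n : ℕ} {A : Matrix (Fin n) (Fin n) ℂ} {ε : ℝ}
    (h : countGt (sv A) ε < n) : pA A ≤ countGt (sv A) ε / n + ε := by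
  set k : Fin n := ⟨countGt (sv A) ε, h⟩
  have hk : sv A k ≤ ε := not_lt.1 fun hlt => ((sv_antitone A).lt_iff_lt_countGt.1 hlt).false
  calc pA A ≤ (k : ℕ) / n + sv A k :=
        ciInf_le ⟨0, by rintro _ ⟨i, rfl⟩; exact add_nonneg (by positivity) (sv_nonneg A i)⟩ k
    _ ≤ _ := by gcongr

lemma min_le_pA {n : ℕ} (hn : 0 < n) (A : Matrix (Fin n) (Fin n) ℂ) (ε : ℝ) :
    min ε (countGt (sv A) ε / n) ≤ pA A := by
  have : Nonempty (Fin n) := ⟨⟨0, hn⟩⟩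
  refine le_ciInf fun i => ?_
  rcases lt_or_ge (i : ℕ) (countGt (sv A) ε) with hi | hi
  · have := (sv_antitone A).lt_iff_lt_countGt.2 hi
    have : (0 : ℝ) ≤ (i : ℕ) / n := by positivity
    linarith [min_le_left ε (countGt (sv A) ε / n)]
  · have : (countGt (sv A) ε : ℝ) / n ≤ (i : ℕ) / n := by gcongr
    linarith [min_le_right ε (countGt (sv A) ε / n), sv_nonneg A i]

lemma limsup_ofReal_eq_zero_iff {α : Type*} {l : Filter α} [l.NeBot] {u : α → ℝ}
    (hu : ∀ a, 0 ≤ u a) :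
    limsup (fun a => ENNReal.ofReal (u a)) l = 0 ↔ Tendsto u l (𝓝 0) := by
  constructor
  · intro h
    have hlim : Tendsto (fun a => ENNReal.ofReal (u a)) l (𝓝 0) :=
      tendsto_of_le_liminf_of_limsup_le bot_le h.le
    exact ((ENNReal.tendsto_toReal ENNReal.zero_ne_top).comp hlim).congr
      fun a => ENNReal.toReal_ofReal (hu a)
  · intro h
    simpa using (ENNReal.tendsto_ofReal h).limsup_eq

lemma tendsto_pA_zero_iff {A : (n : ℕ) → Matrix (Fin n) (Fin n) ℂ} :
    Tendsto (fun n => pA (A n)) atTop (𝓝 0) ↔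
      ∀ ε > 0, Tendsto (fun n => (countGt (sv (A n)) ε : ℝ) / n) atTop (𝓝 0) := by
  constructor
  · intro h ε hε
    refine tendsto_order.2 ⟨fun a ha => .of_forall fun n => ha.trans_le (by positivity),
      fun δ hδ => ?_⟩
    filter_upwards [(tendsto_order.1 h).2 _ (lt_min hε hδ), eventually_gt_atTop 0] with n hp hn
    by_contra! hle
    have := (min_le_min_left ε hle).trans (min_le_pA hn (A n) ε)
    exact this.not_gt hp
  · intro h
    refine tendsto_order.2 ⟨fun a ha => .of_forall fun n => ha.trans_le (pA_nonneg _),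
      fun η hη => ?_⟩
    filter_upwards [(tendsto_order.1 (h (η / 2) (half_pos hη))).2 _ (lt_min (half_pos hη) one_pos),
      eventually_gt_atTop 0] with n hc hn
    have hlt : countGt (sv (A n)) (η / 2) < n := by
      have := (div_lt_one (Nat.cast_pos.2 hn)).1 (hc.trans_le (min_le_right _ _))
      exact_mod_cast this
    linarith [pA_le_countGt_div_add hlt, min_le_left (η / 2) 1]

lemma tendsto_countGt_div_of_tendsto_average {s : (n : ℕ) → Fin n → ℝ}
    (h : ∀ F : ℝ → ℂ, Continuous F → HasCompactSupport F →
      Tendsto (fun n : ℕ => (n : ℂ)⁻¹ * ∑ i, F (s n i)) atTop (𝓝 (F 0)))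
    {ε : ℝ} (hε : 0 < ε) :
    Tendsto (fun n => (countGt (s n) ε : ℝ) / n) atTop (𝓝 0) := by
  let φ : ContDiffBump (0 : ℝ) := ⟨ε / 2, ε, half_pos hε, half_lt_self hε⟩
  have hφ : Tendsto (fun n : ℕ => (n : ℝ)⁻¹ * ∑ i, φ (s n i)) atTop (𝓝 1) := by
    have := h (fun x => (φ x : ℂ)) (Complex.continuous_ofReal.comp φ.continuous)
      (φ.hasCompactSupport.comp_left Complex.ofReal_zero)
    rw [φ.one_of_mem_closedBall (Metric.mem_closedBall_self φ.rIn_pos.le)] at this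
    exact tendsto_ofReal_iff.1 (by push_cast; exact this)
  have hind : ∀ x, (if ε < x then 1 else 0 : ℝ) ≤ 1 - φ x := fun x => by
    split_ifs with hx
    · rw [φ.zero_of_le_dist (by simpa [Real.dist_eq] using hx.le.trans (le_abs_self x)), sub_zero]
    · linarith [φ.le_one (x := x)]
  refine squeeze_zero (fun n => by positivity) (fun n => ?_)
    (by simpa using (tendsto_const_nhds (x := (1 : ℝ))).sub hφ)
  calc (countGt (s n) ε : ℝ) / n = (n : ℝ)⁻¹ * ∑ i, if ε < s n i then 1 else 0 := by
        rw [countGt, natCast_card_filter, div_eq_inv_mul]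
    _ ≤ (n : ℝ)⁻¹ * ∑ i, (1 - φ (s n i)) := by gcongr with i; exact hind _
    _ = (n : ℝ)⁻¹ * n - (n : ℝ)⁻¹ * ∑ i, φ (s n i) := by simp [mul_sub]
    _ ≤ 1 - (n : ℝ)⁻¹ * ∑ i, φ (s n i) := by
        gcongr
        exact inv_mul_le_one_of_le₀ le_rfl (by positivity)

lemma norm_average_sub_le {n : ℕ} (hn : 0 < n) {s : Fin n → ℝ} (hs : ∀ i, 0 ≤ s i) {F : ℝ → ℂ}
    {M δ η : ℝ} (hη : 0 ≤ η) (hM : ∀ x, ‖F x‖ ≤ M) (hδ : ∀ x ∈ Set.Icc 0 δ, ‖F x - F 0‖ ≤ η) :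
    ‖(n : ℂ)⁻¹ * ∑ i, F (s i) - F 0‖ ≤ η + countGt s δ / n * (2 * M) := by
  have hterm : ∀ i, ‖F (s i) - F 0‖ ≤ η + (if δ < s i then 1 else 0) * (2 * M) := by
    intro i
    split_ifs with hi
    · linarith [norm_sub_le (F (s i)) (F 0), hM (s i), hM 0]
    · simpa using hδ _ ⟨hs i, not_lt.1 hi⟩
  have hn' : (n : ℂ) ≠ 0 := Nat.cast_ne_zero.2 hn.ne'
  calc ‖(n : ℂ)⁻¹ * ∑ i, F (s i) - F 0‖ = (n : ℝ)⁻¹ * ‖∑ i, (F (s i) - F 0)‖ := by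
        rw [sum_sub_distrib, sum_const, card_univ, Fintype.card_fin, nsmul_eq_mul,
          ← Complex.norm_natCast, ← norm_inv, ← norm_mul, mul_sub, inv_mul_cancel_left₀ hn']
    _ ≤ (n : ℝ)⁻¹ * ∑ i, (η + (if δ < s i then 1 else 0) * (2 * M)) := by
        gcongr
        exact (norm_sum_le _ _).trans (sum_le_sum fun i _ => hterm i)
    _ = η + countGt s δ / n * (2 * M) := by
        rw [sum_add_distrib, sum_const, ← sum_mul, ← natCast_card_filter, card_univ,
          Fintype.card_fin, nsmul_eq_mul, countGt]
        field_simp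

lemma tendsto_average_of_tendsto_countGt_div {s : (n : ℕ) → Fin n → ℝ} (hs : ∀ n i, 0 ≤ s n i)
    (h : ∀ ε > 0, Tendsto (fun n => (countGt (s n) ε : ℝ) / n) atTop (𝓝 0))
    {F : ℝ → ℂ} (hF : Continuous F) (hFc : HasCompactSupport F) :
    Tendsto (fun n : ℕ => (n : ℂ)⁻¹ * ∑ i, F (s n i)) atTop (𝓝 (F 0)) := by
  obtain ⟨M, hM⟩ := hFc.exists_bound_of_continuous hF
  refine Metric.tendsto_nhds.2 fun η hη => ?_
  obtain ⟨δ, hδ, hδF⟩ := Metric.continuousAt_iff.1 hF.continuousAt (η / 2) (half_pos hη)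
  have hnear : ∀ x ∈ Set.Icc 0 (δ / 2), ‖F x - F 0‖ ≤ η / 2 := fun x hx => by
    rw [← dist_eq_norm]
    refine (hδF ?_).le
    rw [Real.dist_eq, sub_zero, abs_of_nonneg hx.1]
    linarith [hx.2]
  have hfew : ∀ᶠ n in atTop, (countGt (s n) (δ / 2) : ℝ) / n * (2 * M) < η / 2 := by
    have := (h (δ / 2) (half_pos hδ)).mul_const (2 * M)
    rw [zero_mul] at this
    exact this.eventually (gt_mem_nhds (half_pos hη))
  filter_upwards [hfew, eventually_gt_atTop 0] with n hfew hn
  rw [dist_eq_norm]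
  linarith [norm_average_sub_le hn (hs n) (half_pos hη).le hM hnear]

lemma tendsto_average_iff_tendsto_countGt_div {s : (n : ℕ) → Fin n → ℝ}
    (hs : ∀ n i, 0 ≤ s n i) :
    (∀ F : ℝ → ℂ, Continuous F → HasCompactSupport F →
      Tendsto (fun n : ℕ => (n : ℂ)⁻¹ * ∑ i, F (s n i)) atTop (𝓝 (F 0))) ↔
      ∀ ε > 0, Tendsto (fun n => (countGt (s n) ε : ℝ) / n) atTop (𝓝 0) :=
  ⟨fun h _ => tendsto_countGt_div_of_tendsto_average h,
    fun h _ => tendsto_average_of_tendsto_countGt_div hs h⟩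

lemma specSymb_zero_iff {d : ℕ} {D : Set (Fin d → ℝ)} (hD0 : 0 < volume D)
    (hDfin : volume D < ⊤) {A : (n : ℕ) → Matrix (Fin n) (Fin n) ℂ} :
    SpecSymb D A (fun _ => 0) ↔ ∀ F : ℝ → ℂ, Continuous F → HasCompactSupport F →
      Tendsto (fun n : ℕ => (n : ℂ)⁻¹ * ∑ i, F (sv (A n) i)) atTop (𝓝 (F 0)) := by
  have hav : ∀ c : ℂ, (volume D).toReal⁻¹ • ∫ _ in D, c = c := fun c => by
    rw [← measureReal_def, ← setAverage_eq, setAverage_const hD0.ne' hDfin.ne]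
  simp only [SpecSymb, norm_zero, hav]

theorem rho_eq_zero_iff_zero_distributed_general {d : ℕ} (D : Set (Fin d → ℝ))
    (hD0 : 0 < volume D) (hDfin : volume D < ⊤)
    (C : (n : ℕ) → Matrix (Fin n) (Fin n) ℂ) :
    rho C = 0 ↔ SpecSymb D C (fun _ => 0) := by
  rw [rho, limsup_ofReal_eq_zero_iff fun n => pA_nonneg _, tendsto_pA_zero_iff,
    specSymb_zero_iff hD0 hDfin, tendsto_average_iff_tendsto_countGt_div fun n => sv_nonneg _]

/-- `ρ({C_n}) = 0` iff `{C_n}` is zero-distributed, i.e. `{C_n} ∼_σ 0`. -/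
theorem rho_eq_zero_iff_zero_distributed {d : ℕ} (D : Set (Fin d → ℝ))
    (hD : MeasurableSet D) (hD0 : 0 < volume D) (hDfin : volume D < ⊤)
    (C : (n : ℕ) → Matrix (Fin n) (Fin n) ℂ) :
    rho C = 0 ↔ SpecSymb D C (fun _ => 0) :=
  rho_eq_zero_iff_zero_distributed_general D hD0 hDfin C
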